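/- For every integer m ≥ 2 there exists a constant C = C(m) > 0 with the following property. Let q be an odd prime power, r ∈ F_q^*, and ε = (ε_{i,j})_{1 ≤ i < j ≤ m} ∈ {0,1}^{m(m−1)/2} with ε_{1,2} = 1 and ε_{i,j} = 1 for some 2 ≤ i < j ≤ m. For (a_2,…,a_m) ∈ (F_q^*)^{m−1}, consider the polynomials F(X) = ∏_{2 ≤ j ≤ m} (a_j X + r)^{ε_{1,j}} and G(X) = ∏_{2 ≤ i < j ≤ m} (a_i a_j X^2 + r)^{ε_{i,j}} over F_q. Then the number of (m−1)-tuples (a_2,…,a_m) ∈ (F_q^*)^{m−1} for which F or G is the square of a polynomial over the algebraic closure of F_q is at most C q^{m−2}. -/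
import Mathlib

open Polynomial

lemma aux_even_count_roots {K : Type*} [Field K] [DecidableEq K] {P : K[X]} (hP : P ≠ 0)
    (h : IsSquare P) (α : K) : Even (P.roots.count α) := by
  obtain ⟨Q, rfl⟩ := h
  rw [Polynomial.roots_mul hP, Multiset.count_add]
  exact Even.add_self _

lemma aux_roots_linear {K : Type*} [Field K] {a r : K} (ha : a ≠ 0) :
    (C a * X + C r).roots = {-(r / a)} := by
  have h : C a * (X - C (-(r / a))) = C a * X + C r := by
    rw [mul_sub, ← C_mul, mul_neg, mul_comm a (r / a), div_mul_cancel₀ r ha, C_neg,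
      sub_neg_eq_add]
  rw [← h, roots_C_mul _ ha, roots_X_sub_C]

lemma aux_linear_ne_zero {K : Type*} [Field K] {a r : K} (hr : r ≠ 0) :
    C a * X + C r ≠ 0 := by
  intro h
  have := congrArg (Polynomial.eval 0) h
  simp at this
  exact hr this

lemma aux_quad_ne_zero {K : Type*} [Field K] {a r : K} (hr : r ≠ 0) :
    C a * X ^ 2 + C r ≠ 0 := by
  intro h
  have := congrArg (Polynomial.eval 0) h
  simp at this
  exact hr this

lemma aux_count_roots_quad {K : Type*} [Field K] [DecidableEq K] (h2 : (2 : K) ≠ 0)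
    {r b b0 α : K}
    (hr : r ≠ 0) (hb : b ≠ 0) (hb0 : b0 ≠ 0) (hα : α ^ 2 = -(r / b0)) :
    (C b * X ^ 2 + C r).roots.count α = if b = b0 then 1 else 0 := by
  have hα0 : α ≠ 0 := by
    intro h
    rw [h] at hα
    rw [zero_pow (by norm_num), eq_comm, neg_eq_zero, _root_.div_eq_zero_iff] at hα
    tauto
  have hαne : α ≠ -α := by
    intro h
    apply hα0
    have h' : 2 * α = 0 := by linear_combination h
    rcases mul_eq_zero.mp h' with h'' | h''
    · exact absurd h'' h2
    · exact h''
  split_ifs with hbb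
  · subst hbb
    have hkey : C b * X ^ 2 + C r = C b * ((X - C α) * (X + C α)) := by
      have h1 : (X - C α) * (X + C α) = X ^ 2 - C (α ^ 2) := by
        rw [C_pow]
        ring
      rw [h1, mul_sub, ← C_mul, hα, mul_neg, mul_comm b (r / b), div_mul_cancel₀ r hb,
        C_neg, sub_neg_eq_add]
    have hmul_ne : (X - C α) * (X + C α) ≠ 0 :=
      mul_ne_zero (X_sub_C_ne_zero α) (X_add_C_ne_zero α)
    rw [hkey, roots_C_mul _ hb, Polynomial.roots_mul hmul_ne, roots_X_sub_C]
    have : (X + C α) = X - C (-α) := by rw [C_neg, sub_neg_eq_add]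
    rw [this, roots_X_sub_C, Multiset.count_add, Multiset.count_singleton,
      Multiset.count_singleton, if_pos rfl, if_neg hαne]
  · rw [Multiset.count_eq_zero]
    intro hmem
    rw [Polynomial.mem_roots (aux_quad_ne_zero hr)] at hmem
    apply hbb
    have : b * α ^ 2 + r = 0 := by
      simpa using hmem
    rw [hα] at this
    field_simp at this
    have h3 : (b - b0) * r = 0 := by linear_combination -this
    rcases mul_eq_zero.mp h3 with h4 | h4
    · exact sub_eq_zero.mp h4
    · exact absurd h4 hr

lemma aux_lemA {K : Type*} [Field K] {m : ℕ} {r : K} (hr : r ≠ 0)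
    {a : Fin m → K} {e : Fin m → ℕ} (he : ∀ j, e j ≤ 1) {z o : Fin m}
    (ho : o ∈ Finset.Ioi z) (ha : ∀ j ∈ Finset.Ioi z, a j ≠ 0) (heo : e o = 1)
    (hsq : IsSquare (∏ j ∈ Finset.Ioi z, (C (a j) * X + C r) ^ e j)) :
    ∃ j ∈ Finset.Ioi z, j ≠ o ∧ e j = 1 ∧ a j = a o := by
  classical
  set s := Finset.Ioi z with hs
  set f : Fin m → K[X] := fun j => (C (a j) * X + C r) ^ e j with hf
  have hne : ∀ j ∈ s, f j ≠ 0 := fun j hj =>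
    pow_ne_zero _ (aux_linear_ne_zero hr)
  have hP : ∏ j ∈ s, f j ≠ 0 := Finset.prod_ne_zero_iff.mpr hne
  set α := -(r / a o) with hαdef
  have hcount : (∏ j ∈ s, f j).roots.count α
      = ∑ j ∈ s, e j * (if a j = a o then 1 else 0) := by
    rw [Polynomial.roots_prod f s hP, Multiset.count_bind]
    have : (Multiset.map (fun b => (f b).roots.count α) s.val).sum
        = ∑ j ∈ s, (f j).roots.count α := rfl
    rw [this]
    refine Finset.sum_congr rfl fun j hj => ?_
    rw [hf, roots_pow, Multiset.count_nsmul, aux_roots_linear (ha j hj),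
      Multiset.count_singleton]
    congr 1
    by_cases hj' : a j = a o
    · rw [if_pos hj', if_pos (by rw [hj'])]
    · rw [if_neg hj', if_neg]
      intro hc
      apply hj'
      rw [hαdef] at hc
      have h2 := (div_eq_div_iff (ha o ho) (ha j hj)).mp (neg_injective hc)
      exact mul_left_cancel₀ hr h2
  have heven : Even (∑ j ∈ s, e j * (if a j = a o then 1 else 0)) := by
    rw [← hcount]; exact aux_even_count_roots hP hsq α
  by_contra hcon
  push_neg at hcon
  have hsum : ∑ j ∈ s, e j * (if a j = a o then 1 else 0) = 1 := by
    have hz : ∑ j ∈ s.erase o, e j * (if a j = a o then 1 else 0) = 0 := by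
      refine Finset.sum_eq_zero fun j hj => ?_
      obtain ⟨hjo, hjs⟩ := Finset.mem_erase.mp hj
      by_cases hja : a j = a o
      · have h5 := hcon j hjs hjo
        have hej : e j ≠ 1 := fun h => (h5 h) hja
        have : e j = 0 := by have := he j; omega
        simp [this]
      · simp [hja]
    rw [← Finset.add_sum_erase s _ ho, hz, heo]
    simp
  rw [hsum] at heven
  simp at heven

lemma aux_lemB {K : Type*} [Field K] [IsAlgClosed K] (h2 : (2 : K) ≠ 0) {m : ℕ} {r : K}
    (hr : r ≠ 0) {a : Fin m → K} {e : Fin m → Fin m → ℕ} (he : ∀ i j, e i j ≤ 1)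
    {z i0 j0 : Fin m} (hi0 : i0 ∈ Finset.Ioi z) (hj0 : j0 ∈ Finset.Ioi i0)
    (ha : ∀ j ∈ Finset.Ioi z, a j ≠ 0) (he0 : e i0 j0 = 1)
    (hsq : IsSquare (∏ i ∈ Finset.Ioi z, ∏ j ∈ Finset.Ioi i,
      (C (a i * a j) * X ^ 2 + C r) ^ e i j)) :
    ∃ i ∈ Finset.Ioi z, ∃ j ∈ Finset.Ioi i, ¬(i = i0 ∧ j = j0) ∧ e i j = 1 ∧
      a i * a j = a i0 * a j0 := by
  classical
  set t : Finset ((_ : Fin m) × Fin m) :=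
    (Finset.Ioi z).sigma (fun i => Finset.Ioi i) with ht
  have hmem : ∀ p ∈ t, p.1 ∈ Finset.Ioi z ∧ p.2 ∈ Finset.Ioi p.1 := by
    intro p hp
    exact Finset.mem_sigma.mp hp
  have hanz : ∀ p ∈ t, a p.1 * a p.2 ≠ 0 := by
    intro p hp
    obtain ⟨h1, h2⟩ := hmem p hp
    exact mul_ne_zero (ha _ h1)
      (ha _ (Finset.mem_Ioi.mpr (lt_trans (Finset.mem_Ioi.mp h1) (Finset.mem_Ioi.mp h2))))
  rw [Finset.prod_sigma'] at hsq
  set f : ((_ : Fin m) × Fin m) → K[X] :=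
    fun p => (C (a p.1 * a p.2) * X ^ 2 + C r) ^ e p.1 p.2 with hf
  have hne : ∀ p ∈ t, f p ≠ 0 := fun p hp => pow_ne_zero _ (aux_quad_ne_zero hr)
  have hP : ∏ p ∈ t, f p ≠ 0 := Finset.prod_ne_zero_iff.mpr hne
  have hp0 : (⟨i0, j0⟩ : (_ : Fin m) × Fin m) ∈ t := Finset.mem_sigma.mpr ⟨hi0, hj0⟩
  have hb0 : a i0 * a j0 ≠ 0 := hanz _ hp0
  obtain ⟨α, hα⟩ := IsAlgClosed.exists_pow_nat_eq (-(r / (a i0 * a j0))) (n := 2) two_pos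
  have hcount : (∏ p ∈ t, f p).roots.count α
      = ∑ p ∈ t, e p.1 p.2 * (if a p.1 * a p.2 = a i0 * a j0 then 1 else 0) := by
    rw [Polynomial.roots_prod f t hP, Multiset.count_bind]
    have : (Multiset.map (fun b => (f b).roots.count α) t.val).sum
        = ∑ p ∈ t, (f p).roots.count α := rfl
    rw [this]
    refine Finset.sum_congr rfl fun p hp => ?_
    rw [hf, roots_pow, Multiset.count_nsmul,
      aux_count_roots_quad h2 hr (hanz p hp) hb0 hα]
  have heven : Even (∑ p ∈ t, e p.1 p.2 * (if a p.1 * a p.2 = a i0 * a j0 then 1 else 0)) := by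
    rw [← hcount]; exact aux_even_count_roots hP hsq α
  by_contra hcon
  push_neg at hcon
  have hsum : ∑ p ∈ t, e p.1 p.2 * (if a p.1 * a p.2 = a i0 * a j0 then 1 else 0) = 1 := by
    have hz : ∑ p ∈ t.erase ⟨i0, j0⟩,
        e p.1 p.2 * (if a p.1 * a p.2 = a i0 * a j0 then 1 else 0) = 0 := by
      refine Finset.sum_eq_zero fun p hp => ?_
      obtain ⟨hpo, hpt⟩ := Finset.mem_erase.mp hp
      obtain ⟨h1, h2⟩ := hmem p hpt
      by_cases hja : a p.1 * a p.2 = a i0 * a j0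
      · have hnn : ¬(p.1 = i0 ∧ p.2 = j0) := by
          rintro ⟨hh1, hh2⟩
          exact hpo (Sigma.ext hh1 (by rw [hh2]))
        have h5 := hcon p.1 h1 p.2 h2 (fun hc1 hc2 => hnn ⟨hc1, hc2⟩)
        have hej : e p.1 p.2 ≠ 1 := fun h => (h5 h) hja
        have : e p.1 p.2 = 0 := by have := he p.1 p.2; omega
        simp [this]
      · simp [hja]
    rw [← Finset.add_sum_erase t _ hp0, hz, he0]
    simp
  rw [hsum] at heven
  simp at heven

lemma aux_card_constraint {m : ℕ} {F : Type} [Field F] [Fintype F] [DecidableEq F]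
    (z k : Fin m) (hzk : z ≠ k) (Φ : (Fin m → F) → F)
    (hΦ : ∀ c c' : Fin m → F, (∀ t, t ≠ k → c t = c' t) → Φ c = Φ c')
    [DecidablePred (fun c : Fin m → F => c z = 1 ∧ c k = Φ c)] :
    (Finset.univ.filter (fun c : Fin m → F => c z = 1 ∧ c k = Φ c)).card
      ≤ Fintype.card F ^ (m - 2) := by
  classical
  set s : Finset (Fin m) := ({z, k} : Finset (Fin m))ᶜ with hs
  have hcard : s.card = m - 2 := by
    rw [hs, Finset.card_compl, Finset.card_insert_of_notMem (by simp [hzk]),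
      Finset.card_singleton]
    simp
  have hinj : ∀ c ∈ Finset.univ.filter (fun c : Fin m → F => c z = 1 ∧ c k = Φ c),
      ∀ c' ∈ Finset.univ.filter (fun c : Fin m → F => c z = 1 ∧ c k = Φ c),
      (fun (t : {t // t ∈ s}) => c t.1) = (fun (t : {t // t ∈ s}) => c' t.1) → c = c' := by
    intro c hc c' hc' hfe
    simp only [Finset.mem_filter, Finset.mem_univ, true_and] at hc hc'
    have hoff : ∀ t, t ≠ z → t ≠ k → c t = c' t := by
      intro t htz htk
      have hts : t ∈ s := by simp [hs, htz, htk]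
      exact congrFun hfe ⟨t, hts⟩
    have hk' : ∀ t, t ≠ k → c t = c' t := by
      intro t htk
      by_cases htz : t = z
      · rw [htz, hc.1, hc'.1]
      · exact hoff t htz htk
    funext t
    by_cases htk : t = k
    · rw [htk, hc.2, hc'.2, hΦ c c' hk']
    · exact hk' t htk
  calc (Finset.univ.filter (fun c : Fin m → F => c z = 1 ∧ c k = Φ c)).card
      ≤ (Finset.univ : Finset ({t // t ∈ s} → F)).card :=
        Finset.card_le_card_of_injOn (fun c => fun t => c t.1)
          (fun _ _ => Finset.mem_univ _) hinj
    _ = Fintype.card F ^ (m - 2) := by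
        rw [Finset.card_univ, Fintype.card_fun, Fintype.card_coe, hcard]

lemma aux_main (m : ℕ) {F : Type} [Field F] [Fintype F]
    (hodd : Odd (Fintype.card F)) (r : F) (hr : r ≠ 0) (ε : Fin m → Fin m → ℕ)
    (hε : ∀ i j, ε i j ≤ 1) (z o i0 j0 : Fin m) (hzo : z < o) (h01 : ε z o = 1)
    (hzi0 : z < i0) (hi0j0 : i0 < j0) (he0 : ε i0 j0 = 1) :
    Nat.card {c : Fin m → F //
        (c z = 1 ∧ ∀ i : Fin m, i ≠ z → c i ≠ 0) ∧
        (IsSquare ((∏ j ∈ Finset.Ioi z,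
              (Polynomial.C (c j) * Polynomial.X + Polynomial.C r) ^ (ε z j)).map
            (algebraMap F (AlgebraicClosure F))) ∨
         IsSquare ((∏ i ∈ Finset.Ioi z, ∏ j ∈ Finset.Ioi i,
              (Polynomial.C (c i * c j) * Polynomial.X ^ 2 + Polynomial.C r) ^ (ε i j)).map
            (algebraMap F (AlgebraicClosure F))))}
      ≤ (m ^ 2 + m + 1) * Fintype.card F ^ (m - 2) := by
  classical
  set K := AlgebraicClosure F with hK
  set φ : F →+* K := (algebraMap F K : F →+* K) with hφdef
  have hφ : Function.Injective φ := φ.injective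
  have h2F : (2 : F) ≠ 0 := by
    intro h
    have hd : ringChar F ∣ 2 := ringChar.dvd (by exact_mod_cast h)
    have h2 : ringChar F = 2 :=
      ((Nat.dvd_prime Nat.prime_two).mp hd).resolve_left CharP.ringChar_ne_one
    have hcard := FiniteField.even_card_of_char_two h2
    rw [Nat.odd_iff] at hodd
    omega
  have h2K : (2 : K) ≠ 0 := fun h => h2F (hφ (by rw [map_ofNat, map_zero]; exact h))
  have hrK : φ r ≠ 0 := fun h => hr (hφ (by rw [h, map_zero]))
  set B := Fintype.card F ^ (m - 2) with hB
  set I1 : Finset (Fin m) := Finset.univ.filter (fun j => j ≠ z ∧ j ≠ o) with hI1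
  set T1 : Finset (Fin m → F) := I1.biUnion
    (fun j => Finset.univ.filter (fun c : Fin m → F => c z = 1 ∧ c o = c j)) with hT1
  set I2 : Finset (Fin m × Fin m) := Finset.univ.filter
    (fun p => p.1 ≠ z ∧ p.1 ≠ p.2 ∧ p.1 ≠ i0 ∧ p.1 ≠ j0) with hI2
  set T2 : Finset (Fin m → F) := I2.biUnion
    (fun p => Finset.univ.filter
      (fun c : Fin m → F => c z = 1 ∧ c p.1 = c i0 * c j0 * (c p.2)⁻¹)) with hT2
  have hT1card : T1.card ≤ m * B := by
    refine le_trans Finset.card_biUnion_le ?_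
    refine le_trans (Finset.sum_le_card_nsmul I1 _ B ?_) ?_
    · intro j hj
      rw [hI1, Finset.mem_filter] at hj
      exact aux_card_constraint z o (ne_of_lt hzo) (fun c => c j)
        (fun c c' h => h j hj.2.2)
    · rw [smul_eq_mul]
      refine Nat.mul_le_mul_right _ ?_
      exact le_trans (Finset.card_filter_le _ _) (by simp)
  have hT2card : T2.card ≤ m ^ 2 * B := by
    refine le_trans Finset.card_biUnion_le ?_
    refine le_trans (Finset.sum_le_card_nsmul I2 _ B ?_) ?_
    · intro p hp
      rw [hI2, Finset.mem_filter] at hp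
      refine aux_card_constraint z p.1 (Ne.symm hp.2.1)
        (fun c => c i0 * c j0 * (c p.2)⁻¹) ?_
      intro c c' h
      show c i0 * c j0 * (c p.2)⁻¹ = c' i0 * c' j0 * (c' p.2)⁻¹
      rw [h i0 (Ne.symm hp.2.2.2.1), h j0 (Ne.symm hp.2.2.2.2), h p.2 (Ne.symm hp.2.2.1)]
    · rw [smul_eq_mul]
      refine Nat.mul_le_mul_right _ ?_
      refine le_trans (Finset.card_filter_le _ _) ?_
      simp [sq]
  rw [Nat.card_eq_fintype_card, Fintype.card_subtype]
  refine le_trans (Finset.card_le_card (show _ ⊆ T1 ∪ T2 from ?_)) ?_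
  · intro c hc
    simp only [Finset.mem_filter, Finset.mem_univ, true_and] at hc
    obtain ⟨⟨hc1, hcnz⟩, hsq⟩ := hc
    rw [Finset.mem_union]
    have hanz : ∀ j ∈ Finset.Ioi z, φ (c j) ≠ 0 := fun j hj h =>
      (hcnz j (ne_of_gt (Finset.mem_Ioi.mp hj))) (hφ (by rw [h, map_zero]))
    rcases hsq with hsq | hsq
    · left
      have hmapF : ((∏ j ∈ Finset.Ioi z,
            (Polynomial.C (c j) * Polynomial.X + Polynomial.C r) ^ (ε z j)).map φ)
          = ∏ j ∈ Finset.Ioi z, (C (φ (c j)) * X + C (φ r)) ^ (ε z j) := by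
        simp only [Polynomial.map_prod, Polynomial.map_pow, Polynomial.map_add,
          Polynomial.map_mul, Polynomial.map_C, Polynomial.map_X]
      rw [hmapF] at hsq
      obtain ⟨j, hjmem, hjo, hej, haj⟩ := aux_lemA hrK (fun j => hε z j)
        (Finset.mem_Ioi.mpr hzo) hanz h01 hsq
      refine Finset.mem_biUnion.mpr ⟨j, ?_, ?_⟩
      · rw [hI1, Finset.mem_filter]
        exact ⟨Finset.mem_univ _, ne_of_gt (Finset.mem_Ioi.mp hjmem), hjo⟩
      · rw [Finset.mem_filter]
        exact ⟨Finset.mem_univ _, hc1, (hφ haj).symm⟩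
    · right
      have hmapG : ((∏ i ∈ Finset.Ioi z, ∏ j ∈ Finset.Ioi i,
            (Polynomial.C (c i * c j) * Polynomial.X ^ 2 + Polynomial.C r) ^ (ε i j)).map φ)
          = ∏ i ∈ Finset.Ioi z, ∏ j ∈ Finset.Ioi i,
            (C (φ (c i) * φ (c j)) * X ^ 2 + C (φ r)) ^ (ε i j) := by
        simp only [Polynomial.map_prod, Polynomial.map_pow, Polynomial.map_add,
          Polynomial.map_mul, Polynomial.map_C, Polynomial.map_X, map_mul]
      rw [hmapG] at hsq
      obtain ⟨i, himem, j, hjmem, hnij, heij, haij⟩ := aux_lemB h2K hrK hε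
        (Finset.mem_Ioi.mpr hzi0) (Finset.mem_Ioi.mpr hi0j0) hanz he0 hsq
      have hi : z < i := Finset.mem_Ioi.mp himem
      have hj : i < j := Finset.mem_Ioi.mp hjmem
      have hzj : z < j := lt_trans hi hj
      have hci : c i ≠ 0 := hcnz i (ne_of_gt hi)
      have hcj : c j ≠ 0 := hcnz j (ne_of_gt hzj)
      have hcc : c i * c j = c i0 * c j0 := hφ (by rw [map_mul, map_mul]; exact haij)
      by_cases hii : i ≠ i0 ∧ i ≠ j0
      · refine Finset.mem_biUnion.mpr ⟨(i, j), ?_, ?_⟩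
        · rw [hI2, Finset.mem_filter]
          exact ⟨Finset.mem_univ _, ne_of_gt hi, ne_of_lt hj, hii.1, hii.2⟩
        · rw [Finset.mem_filter]
          exact ⟨Finset.mem_univ _, hc1, (eq_mul_inv_iff_mul_eq₀ hcj).mpr hcc⟩
      · have hji0 : j ≠ i0 ∧ j ≠ j0 := by
          rcases Decidable.em (i = i0) with hei | hei
          · exact ⟨by rw [← hei]; exact ne_of_gt hj, fun h => hnij ⟨hei, h⟩⟩
          · push_neg at hii
            have hei2 : i = j0 := hii hei
            exact ⟨ne_of_gt (lt_trans (hei2 ▸ hi0j0) hj),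
              by rw [← hei2]; exact ne_of_gt hj⟩
        refine Finset.mem_biUnion.mpr ⟨(j, i), ?_, ?_⟩
        · rw [hI2, Finset.mem_filter]
          exact ⟨Finset.mem_univ _, ne_of_gt hzj, ne_of_gt hj, hji0.1, hji0.2⟩
        · rw [Finset.mem_filter]
          refine ⟨Finset.mem_univ _, hc1, (eq_mul_inv_iff_mul_eq₀ hci).mpr ?_⟩
          rw [mul_comm]
          exact hcc
  · refine le_trans (Finset.card_union_le _ _) ?_
    calc T1.card + T2.card ≤ m * B + m ^ 2 * B := add_le_add hT1card hT2card
      _ ≤ (m ^ 2 + m + 1) * B := by nlinarith [Nat.zero_le B]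

/-- For every integer `m ≥ 2` there is `C = C(m) > 0` with the following property.
Let `F` be a finite field of odd cardinality `q` (an odd prime power), `r ∈ F^*`, and
`ε = (ε_{i,j})_{i<j}` with entries in `{0,1}` (indexed from `0` here), with
`ε_{1,2} = 1` and `ε_{i,j} = 1` for some pair with `2 ≤ i < j`. For an
`(m−1)`-tuple `(a_2,…,a_m) ∈ (F^*)^{m−1}` (encoded as `c : Fin m → F` with `c 0 = 1`
and `c i ≠ 0` for `i ≠ 0`), consider the polynomials
`F(X) = ∏_{2 ≤ j ≤ m} (a_j X + r)^{ε_{1,j}}` and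
`G(X) = ∏_{2 ≤ i < j ≤ m} (a_i a_j X² + r)^{ε_{i,j}}` over `F`. The number of such
tuples for which `F` or `G` is the square of a polynomial over the algebraic closure
of `F` is at most `C q^{m−2}`. -/
theorem square_polynomial_tuples_count (m : ℕ) (hm : 2 ≤ m) :
    ∃ C : ℝ, 0 < C ∧
      ∀ (F : Type) [Field F] [Fintype F],
        Odd (Fintype.card F) →
        ∀ r : F, r ≠ 0 →
        ∀ ε : Fin m → Fin m → ℕ, (∀ i j : Fin m, ε i j ≤ 1) →
          ε ⟨0, by omega⟩ ⟨1, by omega⟩ = 1 →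
          (∃ i j : Fin m, (⟨0, by omega⟩ : Fin m) < i ∧ i < j ∧ ε i j = 1) →
          (Nat.card {c : Fin m → F //
              (c ⟨0, by omega⟩ = 1 ∧ ∀ i : Fin m, i ≠ ⟨0, by omega⟩ → c i ≠ 0) ∧
              (IsSquare ((∏ j ∈ Finset.Ioi (⟨0, by omega⟩ : Fin m),
                    (Polynomial.C (c j) * Polynomial.X + Polynomial.C r)
                      ^ (ε ⟨0, by omega⟩ j)).map
                  (algebraMap F (AlgebraicClosure F))) ∨
               IsSquare ((∏ i ∈ Finset.Ioi (⟨0, by omega⟩ : Fin m),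
                    ∏ j ∈ Finset.Ioi i,
                      (Polynomial.C (c i * c j) * Polynomial.X ^ 2 + Polynomial.C r)
                        ^ (ε i j)).map
                  (algebraMap F (AlgebraicClosure F))))} : ℝ)
            ≤ C * (Fintype.card F : ℝ) ^ (m - 2) := by
  refine ⟨((m ^ 2 + m + 1 : ℕ) : ℝ), by positivity, ?_⟩
  intro F _ _ hodd r hr ε hε h01 hex
  obtain ⟨i0, j0, hzi0, hi0j0, he0⟩ := hex
  have h := aux_main m hodd r hr ε hε ⟨0, by omega⟩ ⟨1, by omega⟩ i0 j0
    (by rw [Fin.mk_lt_mk]; omega) h01 hzi0 hi0j0 he0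
  refine le_trans (Nat.cast_le.mpr h) ?_
  push_cast
  ring_nf
  exact le_refl _
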